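/- arXiv:1101.4607 — 3 statements merged into one kernel-verified Lean document; each statement's English description precedes it below -/
import Mathlib

section
/- Let X be a random variable on an arbitrary measurable space and Y, Z real random variables whose conditional distribution functions F_{Y|X}(·|x) and F_{Z|X}(·|x) are continuous for almost every x. Define U = F_{Y|X}(Y|X) and V = F_{Z|X}(Z|X) (the partial copula transform). If Y ⫫ Z | X then U ⫫ V. -/
/-!
Conditional independence makes the joint law of `(X, Y, Z)` the mixture over `x ∼ law(X)` of the
product laws `condDistrib Y X μ x ⊗ condDistrib Z X μ x`. Pushing such a product forward by
`(y, z) ↦ (F x y, G x z)` gives the product of the two probability integral transforms, and when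
the conditional distribution functions are continuous both are uniform on `[0, 1]`, whatever `x`
is. So the mixture is the constant measure `uniform ⊗ uniform`, which is the independence of
`U` and `V`.
-/

open MeasureTheory ProbabilityTheory Set

section ProbabilityIntegralTransform

variable {ρ : Measure ℝ}

lemma exists_cdf_eq (hc : Continuous (cdf ρ)) {u : ℝ} (hu : u ∈ Ioo 0 1) :
    ∃ y, cdf ρ y = u :=
  mem_range_of_exists_le_of_exists_ge hc
    ((tendsto_cdf_atBot ρ).eventually (eventually_le_nhds hu.1)).exists
    ((tendsto_cdf_atTop ρ).eventually (eventually_ge_nhds hu.2)).exists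

lemma exists_setOf_cdf_le_eq_Iic (hc : Continuous (cdf ρ)) {u : ℝ} (hu : u < 1)
    (hne : {y | cdf ρ y ≤ u}.Nonempty) : ∃ s, {y | cdf ρ y ≤ u} = Iic s := by
  obtain ⟨N, hN⟩ := ((tendsto_cdf_atTop ρ).eventually (eventually_gt_nhds hu)).exists
  have hbdd : BddAbove {y | cdf ρ y ≤ u} :=
    ⟨N, fun y hy => not_lt.1 fun hNy => (hN.trans_le ((monotone_cdf ρ) hNy.le)).not_ge hy⟩
  have hmem := (isClosed_le hc continuous_const).csSup_mem hne hbdd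
  exact ⟨_, subset_antisymm (fun y hy => le_csSup hbdd hy)
    (fun y hy => ((monotone_cdf ρ) hy).trans hmem)⟩

lemma measure_setOf_cdf_le [IsProbabilityMeasure ρ] (hc : Continuous (cdf ρ)) (u : ℝ) :
    ρ {y | cdf ρ y ≤ u} = ENNReal.ofReal (min u 1) := by
  rcases le_or_gt 1 u with hu1 | hu1
  · rw [min_eq_right hu1, ENNReal.ofReal_one, ← measure_univ (μ := ρ)]
    exact congrArg ρ (eq_univ_of_forall fun y => (cdf_le_one ρ y).trans hu1)
  rw [min_eq_left hu1.le]
  rcases eq_empty_or_nonempty {y | cdf ρ y ≤ u} with hemp | hne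
  · rw [hemp, measure_empty, eq_comm, ENNReal.ofReal_eq_zero]
    by_contra! hu0
    obtain ⟨y, hy⟩ := exists_cdf_eq hc ⟨hu0, hu1⟩
    exact hemp.subset (show y ∈ {y | cdf ρ y ≤ u} from hy.le)
  obtain ⟨s, hs⟩ := exists_setOf_cdf_le_eq_Iic hc hu1 hne
  have hsu : cdf ρ s ≤ u := (hs.symm ▸ self_mem_Iic : s ∈ {y | cdf ρ y ≤ u})
  have hus : u ≤ cdf ρ s := by
    rcases le_or_gt u 0 with hu0 | hu0
    · exact hu0.trans (cdf_nonneg ρ s)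
    obtain ⟨y, hy⟩ := exists_cdf_eq hc ⟨hu0, hu1⟩
    have hys : y ∈ Iic s := hs ▸ (show y ∈ {y | cdf ρ y ≤ u} from hy.le)
    exact hy ▸ monotone_cdf ρ hys
  rw [hs, ← ofReal_cdf, le_antisymm hsu hus]

theorem map_cdf_eq_volume_restrict_Icc [IsProbabilityMeasure ρ] (hc : Continuous (cdf ρ)) :
    ρ.map (cdf ρ) = volume.restrict (Icc 0 1) := by
  refine Measure.ext_of_Iic _ _ fun u => ?_
  rw [Measure.map_apply (monotone_cdf ρ).measurable measurableSet_Iic,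
    Measure.restrict_apply measurableSet_Iic]
  have hIcc : Iic u ∩ Icc 0 1 = Icc 0 (min u 1) := by
    ext y; simp only [mem_inter_iff, mem_Iic, mem_Icc, le_min_iff]; tauto
  rw [hIcc, Real.volume_Icc, sub_zero]
  exact measure_setOf_cdf_le hc u

end ProbabilityIntegralTransform

lemma ProbabilityTheory.Kernel.measurable_cdf_apply {E : Type*} [MeasurableSpace E]
    (κ : Kernel E ℝ) [IsMarkovKernel κ] :
    Measurable fun p : E × ℝ => cdf (κ p.1) p.2 := by
  have ht : MeasurableSet {q : (E × ℝ) × ℝ | q.2 ≤ q.1.2} :=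
    measurableSet_le measurable_snd measurable_fst.snd
  have h := (Kernel.measurable_kernel_prodMk_left (κ := κ.comap Prod.fst measurable_fst) ht)
  simp_rw [cdf_eq_real, measureReal_def]
  simpa [Kernel.comap_apply, Set.Iic_def] using h.ennreal_toReal

section KernelProduct

variable {E β γ β' γ' : Type*} [MeasurableSpace E] [MeasurableSpace β] [MeasurableSpace γ]
  [MeasurableSpace β'] [MeasurableSpace γ']

lemma map_comp_id_prod_prod_eq_prod {ν : Measure E} [IsProbabilityMeasure ν]
    {κ : Kernel E β} {η : Kernel E γ} [IsSFiniteKernel κ] [IsSFiniteKernel η]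
    {f : E → β → β'} {g : E → γ → γ'} (hf : Measurable (Function.uncurry f))
    (hg : Measurable (Function.uncurry g))
    {P : Measure β'} {Q : Measure γ'} [SFinite P] [SFinite Q]
    (hκ : ∀ᵐ x ∂ν, (κ x).map (f x) = P) (hη : ∀ᵐ x ∂ν, (η x).map (g x) = Q) :
    ((Kernel.id ×ₖ (κ ×ₖ η)) ∘ₘ ν).map (fun p => (f p.1 p.2.1, g p.1 p.2.2)) = P.prod Q := by
  have hfg : Measurable fun p : E × β × γ => (f p.1 p.2.1, g p.1 p.2.2) :=
    (hf.comp (measurable_fst.prodMk measurable_snd.fst)).prodMk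
      (hg.comp (measurable_fst.prodMk measurable_snd.snd))
  rw [Measure.map_comp _ _ hfg, ← one_smul ENNReal (P.prod Q), ← measure_univ (μ := ν),
    ← Measure.const_comp]
  refine Measure.comp_congr ?_
  filter_upwards [hκ, hη] with x hκx hηx
  rw [Kernel.map_apply _ hfg, Kernel.prod_apply, Kernel.id_apply, Kernel.prod_apply,
    Measure.dirac_prod, Measure.map_map hfg measurable_prodMk_left, Kernel.const_apply,
    ← hκx, ← hηx, Measure.map_prod_map _ _ hf.of_uncurry_left hg.of_uncurry_left]
  rfl

lemma ProbabilityTheory.indepFun_of_map_prod_eq_prod {Ω : Type*} [MeasurableSpace Ω]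
    {μ : Measure Ω} [IsFiniteMeasure μ] {U : Ω → β} {V : Ω → γ}
    (hU : Measurable U) (hV : Measurable V)
    {P : Measure β} {Q : Measure γ} [IsProbabilityMeasure P] [IsProbabilityMeasure Q]
    (h : μ.map (fun ω => (U ω, V ω)) = P.prod Q) : IndepFun U V μ := by
  have hUP : μ.map U = P := by rw [← Measure.fst_map_prodMk hV, h, Measure.fst_prod]
  have hVQ : μ.map V = Q := by rw [← Measure.snd_map_prodMk hU, h, Measure.snd_prod]
  rw [indepFun_iff_map_prod_eq_prod_map_map hU.aemeasurable hV.aemeasurable, h, hUP, hVQ]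

end KernelProduct

/-- Partial copula transform: if the conditional distribution functions of `Y` and `Z` given
`X` are a.e. continuous and `Y ⫫ Z | X`, then `U = F_{Y|X}(Y|X)` and `V = F_{Z|X}(Z|X)`
are independent. -/
theorem partial_copula_stmt2
    {Ω E : Type*} [MeasurableSpace Ω] [StandardBorelSpace Ω] [MeasurableSpace E]
    (μ : Measure Ω) [IsProbabilityMeasure μ]
    (X : Ω → E) (Y Z : Ω → ℝ)
    (hX : Measurable X) (hY : Measurable Y) (hZ : Measurable Z)
    (F G : E → ℝ → ℝ)
    (hF : ∀ x y, F x y = ((condDistrib Y X μ) x (Set.Iic y)).toReal)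
    (hG : ∀ x z, G x z = ((condDistrib Z X μ) x (Set.Iic z)).toReal)
    (hcontF : ∀ᵐ x ∂(μ.map X), Continuous (F x))
    (hcontG : ∀ᵐ x ∂(μ.map X), Continuous (G x))
    (hCI : CondIndepFun (MeasurableSpace.comap X inferInstance) hX.comap_le Y Z μ) :
    IndepFun (fun ω => F (X ω) (Y ω)) (fun ω => G (X ω) (Z ω)) μ := by
  set κ := condDistrib Y X μ
  set η := condDistrib Z X μ
  have hFκ : F = fun x => ⇑(cdf (κ x)) :=
    funext₂ fun x y => by rw [hF, cdf_eq_real, measureReal_def]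
  have hGη : G = fun x => ⇑(cdf (η x)) :=
    funext₂ fun x z => by rw [hG, cdf_eq_real, measureReal_def]
  have hFm : Measurable (Function.uncurry F) := hFκ ▸ κ.measurable_cdf_apply
  have hGm : Measurable (Function.uncurry G) := hGη ▸ η.measurable_cdf_apply
  have : IsProbabilityMeasure (μ.map X) := Measure.isProbabilityMeasure_map hX.aemeasurable
  have : IsProbabilityMeasure (volume.restrict (Icc (0 : ℝ) 1)) := ⟨by simp⟩
  have hFunif : ∀ᵐ x ∂(μ.map X), (κ x).map (F x) = volume.restrict (Icc 0 1) :=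
    hcontF.mono fun x hx => by rw [hFκ] at hx ⊢; exact map_cdf_eq_volume_restrict_Icc hx
  have hGunif : ∀ᵐ x ∂(μ.map X), (η x).map (G x) = volume.restrict (Icc 0 1) :=
    hcontG.mono fun x hx => by rw [hGη] at hx ⊢; exact map_cdf_eq_volume_restrict_Icc hx
  have hlaw := (condIndepFun_iff_map_prod_eq_prod_condDistrib_prod_condDistrib hY hZ hX).1 hCI
  have hjoint : μ.map (fun ω => (F (X ω) (Y ω), G (X ω) (Z ω)))
      = (volume.restrict (Icc 0 1)).prod (volume.restrict (Icc 0 1)) := by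
    rw [← map_comp_id_prod_prod_eq_prod hFm hGm hFunif hGunif, ← hlaw,
      Measure.map_map (by fun_prop) (hX.prodMk (hY.prodMk hZ))]
    rfl
  exact indepFun_of_map_prod_eq_prod (hFm.comp (hX.prodMk hY)) (hGm.comp (hX.prodMk hZ)) hjoint
end

section
/- If (Y_1, Z_1), ..., (Y_4, Z_4) are i.i.d. copies of a pair (Y, Z) of real random variables with Y ⫫ Z, then τ*(Y, Z) := E[sign(a(Y_1, Y_2, Y_3, Y_4)) sign(a(Z_1, Z_2, Z_3, Z_4))] = 0, where a(z_1, z_2, z_3, z_4) = |z_1 − z_2| + |z_3 − z_4| − |z_1 − z_3| − |z_2 − z_4| and sign is the sign function. -/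
open MeasureTheory ProbabilityTheory

/-!
The four pairs are i.i.d. with law `law Y ⊗ law Z`, so their joint law is a product of the
`Y`-coordinates' law and the `Z`-coordinates' law, and the expectation factorizes into
`E[sign a(Y₁,…,Y₄)] · E[sign a(Z₁,…,Z₄)]`. Each factor vanishes: exchanging the two middle
arguments preserves the law of an i.i.d. quadruple but changes the sign of `a`.
-/

/-- Bergsma's kernel `a(z₁,z₂,z₃,z₄) = |z₁-z₂| + |z₃-z₄| - |z₁-z₃| - |z₂-z₄|`. -/
def kernelA (z₁ z₂ z₃ z₄ : ℝ) : ℝ :=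
  |z₁ - z₂| + |z₃ - z₄| - |z₁ - z₃| - |z₂ - z₄|

lemma kernelA_swap_middle (z₁ z₂ z₃ z₄ : ℝ) : kernelA z₁ z₃ z₂ z₄ = -kernelA z₁ z₂ z₃ z₄ := by
  unfold kernelA; ring

lemma Real.measurable_sign : Measurable Real.sign :=
  Measurable.ite measurableSet_Iio measurable_const
    (Measurable.ite measurableSet_Ioi measurable_const measurable_const)

section IIDCoordinates

variable {ι α β F : Type*} [Fintype ι] [MeasurableSpace α] [MeasurableSpace β]
  [NormedAddCommGroup F] [NormedSpace ℝ F]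

lemma integral_pi_comp_perm (ν : Measure α) [SigmaFinite ν] (σ : Equiv.Perm ι)
    (f : (ι → α) → F) :
    ∫ x, f (fun i => x (σ i)) ∂(Measure.pi fun _ => ν) = ∫ x, f x ∂(Measure.pi fun _ => ν) := by
  have hcoe : ⇑(MeasurableEquiv.piCongrLeft (fun _ => α) σ.symm) = fun x i => x (σ i) := by
    ext x i
    simp [MeasurableEquiv.coe_piCongrLeft, Equiv.piCongrLeft_apply_eq_cast]
  simpa [hcoe] using (measurePreserving_piCongrLeft (fun _ => ν) σ.symm).integral_comp' f

lemma integral_pi_eq_zero_of_comp_perm_eq_neg (ν : Measure α) [SigmaFinite ν]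
    (σ : Equiv.Perm ι) {f : (ι → α) → F} (hf : ∀ x, f (fun i => x (σ i)) = -f x) :
    ∫ x, f x ∂(Measure.pi fun _ => ν) = 0 := by
  have h := integral_pi_comp_perm ν σ f
  simp only [hf, integral_neg] at h
  have htwice : (2 : ℝ) • ∫ x, f x ∂(Measure.pi fun _ => ν) = 0 := by
    rw [two_smul]; nth_rw 1 [← h]; exact neg_add_cancel _
  exact (smul_eq_zero.mp htwice).resolve_left two_ne_zero

lemma integral_pi_prod_mul (ν₁ : Measure α) (ν₂ : Measure β) [SigmaFinite ν₁] [SigmaFinite ν₂]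
    (f : (ι → α) → ℝ) (g : (ι → β) → ℝ) :
    ∫ p, f (fun i => (p i).1) * g (fun i => (p i).2) ∂(Measure.pi fun _ => ν₁.prod ν₂) =
      (∫ x, f x ∂(Measure.pi fun _ => ν₁)) * ∫ y, g y ∂(Measure.pi fun _ => ν₂) := by
  rw [← integral_prod_mul,
    ← (measurePreserving_arrowProdEquivProdArrow α β ι _ _).integral_comp']
  rfl

end IIDCoordinates

lemma integral_sign_kernelA_pi (ν : Measure ℝ) [SigmaFinite ν] :
    ∫ z : Fin 4 → ℝ, Real.sign (kernelA (z 0) (z 1) (z 2) (z 3)) ∂(Measure.pi fun _ => ν) = 0 :=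
  integral_pi_eq_zero_of_comp_perm_eq_neg ν (Equiv.swap 1 2) fun z => by
    rw [← Real.sign_neg, ← kernelA_swap_middle]; rfl

/-- If `(Y₁,Z₁),…,(Y₄,Z₄)` are i.i.d. copies of `(Y,Z)` with `Y ⫫ Z`, then
`τ*(Y,Z) = E[sign(a(Y₁,Y₂,Y₃,Y₄)) sign(a(Z₁,Z₂,Z₃,Z₄))] = 0`. -/
theorem partial_copula_stmt10
    {Ω Ω₀ : Type*} [MeasurableSpace Ω] [MeasurableSpace Ω₀]
    (μ : Measure Ω) [IsProbabilityMeasure μ]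
    (μ₀ : Measure Ω₀) [IsProbabilityMeasure μ₀]
    (Y Z : Ω₀ → ℝ) (hY : Measurable Y) (hZ : Measurable Z)
    (hYZ : IndepFun Y Z μ₀)
    (Ys Zs : Fin 4 → Ω → ℝ) (hYs : ∀ i, Measurable (Ys i)) (hZs : ∀ i, Measurable (Zs i))
    (hindep : iIndepFun (fun i ω => (Ys i ω, Zs i ω)) μ)
    (hident : ∀ i, μ.map (fun ω => (Ys i ω, Zs i ω)) = μ₀.map (fun ω => (Y ω, Z ω))) :
    ∫ ω, Real.sign (kernelA (Ys 0 ω) (Ys 1 ω) (Ys 2 ω) (Ys 3 ω)) *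
        Real.sign (kernelA (Zs 0 ω) (Zs 1 ω) (Zs 2 ω) (Zs 3 ω)) ∂μ = 0 := by
  set τ : (Fin 4 → ℝ) → ℝ := fun z => Real.sign (kernelA (z 0) (z 1) (z 2) (z 3))
  have hτ : Measurable τ := Real.measurable_sign.comp (by unfold kernelA; fun_prop)
  have hpair : ∀ i, Measurable fun ω => (Ys i ω, Zs i ω) := fun i => (hYs i).prodMk (hZs i)
  have hlaw_pair : μ₀.map (fun ω => (Y ω, Z ω)) = (μ₀.map Y).prod (μ₀.map Z) :=
    (indepFun_iff_map_prod_eq_prod_map_map hY.aemeasurable hZ.aemeasurable).mp hYZ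
  have hlaw : μ.map (fun ω i => (Ys i ω, Zs i ω)) =
      Measure.pi fun _ => (μ₀.map Y).prod (μ₀.map Z) := by
    rw [hindep.map_fun_eq_pi_map fun i => (hpair i).aemeasurable]
    simp_rw [hident, hlaw_pair]
  have hprod : Measurable fun p : Fin 4 → ℝ × ℝ => τ (fun i => (p i).1) * τ (fun i => (p i).2) :=
    by fun_prop
  calc ∫ ω, τ (fun i => Ys i ω) * τ (fun i => Zs i ω) ∂μ
      = ∫ p, τ (fun i => (p i).1) * τ (fun i => (p i).2) ∂μ.map (fun ω i => (Ys i ω, Zs i ω)) :=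
        (integral_map (measurable_pi_lambda _ hpair).aemeasurable hprod.aestronglyMeasurable).symm
    _ = (∫ y, τ y ∂Measure.pi fun _ => μ₀.map Y) * ∫ z, τ z ∂Measure.pi fun _ => μ₀.map Z := by
        rw [hlaw, integral_pi_prod_mul]
    _ = 0 := by rw [integral_sign_kernelA_pi, zero_mul]
end

section
/- Let U be uniform on [0,1] and F a continuous, strictly increasing distribution function on ℝ. Then F^{-1}(U) has distribution function F, and conversely if Y has continuous distribution function F then F(Y) is uniform on [0,1]. Consequently, under the partial copula setup with Y ⫫ Z | X and F_{Y|X}(·|x), F_{Z|X}(·|x) continuous for a.e. x, the joint distribution of (U, V) = (F_{Y|X}(Y|X), F_{Z|X}(Z|X)) is the product of two uniform [0,1] laws, i.e., the partial copula is the independence copula. -/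
/-!
If `F` is the continuous cdf of `ν`, then for `t ∈ (0,1)` the sublevel set `{F ≤ t}` is a closed
half-line `Iic b` with `F b = t`, so `ν {F ≤ t} = t`: `F` pushes `ν` forward to the uniform law on
`[0,1]`. Conversely, a right inverse `g` of a strictly increasing `F` on `(0,1)` satisfies
`g u ≤ y ↔ u ≤ F y`, so `g` pushes the uniform law to the law with cdf `F`.

Under `Y ⫫ Z | X`, the joint law of `(X, Y, Z)` is `P_X ⊗ (κ_Y ×ₖ κ_Z)` with `κ_Y, κ_Z` the
conditional distributions. For each `x`, the map `(y, z) ↦ (F_{Y|X}(y|x), F_{Z|X}(z|x))` pushes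
`κ_Y x × κ_Z x` to the product of two uniform laws, a measure not depending on `x`, so integrating
over `x` leaves it unchanged.
-/

open MeasureTheory ProbabilityTheory Set Filter Topology

lemma StrictMono.mem_Ioo_of_tendsto {α : Type*} [LinearOrder α] [NoMinOrder α] [NoMaxOrder α]
    {F : α → ℝ} (hF : StrictMono F) (h0 : Tendsto F atBot (𝓝 0)) (h1 : Tendsto F atTop (𝓝 1))
    (y : α) : F y ∈ Ioo 0 1 := by
  obtain ⟨a, ha⟩ := exists_lt y
  obtain ⟨b, hb⟩ := exists_gt y
  exact ⟨(hF.monotone.le_of_tendsto h0 a).trans_lt (hF ha),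
    (hF hb).trans_le (hF.monotone.ge_of_tendsto h1 b)⟩

lemma map_uniform_Iic_of_rightInverse {F g : ℝ → ℝ} (hF : StrictMono F) (hg : Measurable g)
    (hFg : ∀ u ∈ Ioo (0 : ℝ) 1, F (g u) = u) {y : ℝ} (hy : F y ∈ Ioo 0 1) :
    (volume.restrict (Icc (0 : ℝ) 1)).map g (Iic y) = ENNReal.ofReal (F y) := by
  have hpre : g ⁻¹' Iic y ∩ Ioo 0 1 = Ioc 0 (F y) := by
    ext u
    simp only [mem_inter_iff, mem_preimage, mem_Iic, mem_Ioo, mem_Ioc]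
    constructor
    · rintro ⟨hgu, hu0, hu1⟩
      exact ⟨hu0, hFg u ⟨hu0, hu1⟩ ▸ hF.monotone hgu⟩
    · rintro ⟨hu0, huy⟩
      have hu : u ∈ Ioo (0 : ℝ) 1 := ⟨hu0, huy.trans_lt hy.2⟩
      exact ⟨hF.le_iff_le.1 (by rwa [hFg u hu]), hu⟩
  rw [Measure.map_apply hg measurableSet_Iic, Measure.restrict_apply (hg measurableSet_Iic),
    ← measure_congr ((ae_eq_refl _).inter Ioo_ae_eq_Icc), hpre, Real.volume_Ioc, sub_zero]

section Cdf

variable (ν : Measure ℝ) [IsProbabilityMeasure ν]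

lemma measure_cdf_le {t : ℝ} (hc : Continuous (cdf ν)) (h₀ : ∃ y, cdf ν y ≤ t)
    (h₁ : ∃ y, t < cdf ν y) : ν {y | cdf ν y ≤ t} = ENNReal.ofReal t := by
  set S := {y | cdf ν y ≤ t}
  obtain ⟨y₁, hy₁⟩ := h₁
  have hbdd : BddAbove S := ⟨y₁, fun y hy => ((monotone_cdf ν).reflect_lt (hy.trans_lt hy₁)).le⟩
  have hb : sSup S ∈ S := (isClosed_le hc continuous_const).csSup_mem h₀ hbdd
  have hS : S = Iic (sSup S) :=
    Subset.antisymm (fun y hy => le_csSup hbdd hy) (fun y hy => (monotone_cdf ν hy).trans hb)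
  have hcdf : cdf ν (sSup S) = t := by
    refine le_antisymm hb (ge_of_tendsto (hc.continuousWithinAt (s := Ioi (sSup S))) ?_)
    filter_upwards [self_mem_nhdsWithin] with y hy
    exact (not_le.1 fun h => (not_le.2 hy) (le_csSup hbdd h)).le
  rw [hS, ← ofReal_cdf, hcdf]

lemma map_cdf_eq_uniform (hc : Continuous (cdf ν)) :
    ν.map (cdf ν) = volume.restrict (Icc 0 1) := by
  have : IsProbabilityMeasure (ν.map (cdf ν)) :=
    Measure.isProbabilityMeasure_map hc.measurable.aemeasurable
  refine Measure.ext_of_Iic _ _ fun t => ?_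
  rw [Measure.map_apply hc.measurable measurableSet_Iic, Measure.restrict_apply measurableSet_Iic]
  rcases le_or_gt 1 t with ht1 | ht1
  · have hpre : cdf ν ⁻¹' Iic t = univ := eq_univ_of_forall fun y => (cdf_le_one ν y).trans ht1
    rw [hpre, inter_eq_right.2 fun u hu => hu.2.trans ht1, measure_univ, Real.volume_Icc]
    norm_num
  have hIcc : Iic t ∩ Icc (0 : ℝ) 1 = Icc 0 t := by
    ext u
    simp only [mem_inter_iff, mem_Iic, mem_Icc]
    constructor
    · rintro ⟨hut, hu0, -⟩
      exact ⟨hu0, hut⟩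
    · rintro ⟨hu0, hut⟩
      exact ⟨hut, hu0, hut.trans ht1.le⟩
  rw [hIcc, Real.volume_Icc, sub_zero]
  by_cases h₀ : ∃ y, cdf ν y ≤ t
  · exact measure_cdf_le ν hc h₀ ((tendsto_cdf_atTop ν).eventually (lt_mem_nhds ht1)).exists
  · push Not at h₀
    have ht0 : t ≤ 0 := by
      by_contra! ht0
      obtain ⟨y, hy⟩ := ((tendsto_cdf_atBot ν).eventually (gt_mem_nhds ht0)).exists
      exact (h₀ y).not_gt hy
    have hpre : cdf ν ⁻¹' Iic t = ∅ := eq_empty_of_forall_notMem fun y hy => (h₀ y).not_ge hy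
    rw [hpre, measure_empty, ENNReal.ofReal_of_nonpos ht0]

end Cdf

section Kernel

variable {α : Type*} [MeasurableSpace α]

lemma measurable_cdf_kernel (κ : Kernel α ℝ) [IsMarkovKernel κ] :
    Measurable fun p : α × ℝ => cdf (κ p.1) p.2 := by
  have hIic : Measurable fun p : α × ℝ => κ p.1 (Iic p.2) :=
    Kernel.measurable_kernel_prodMk_left (κ := κ.comap Prod.fst measurable_fst)
      (measurableSet_le measurable_snd measurable_fst.snd)
  simp_rw [cdf_eq_real, measureReal_def]
  exact hIic.ennreal_toReal

lemma measurable_cdf_prod_cdf_kernel (κ η : Kernel α ℝ) [IsMarkovKernel κ] [IsMarkovKernel η] :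
    Measurable fun p : α × ℝ × ℝ => (cdf (κ p.1) p.2.1, cdf (η p.1) p.2.2) :=
  ((measurable_cdf_kernel κ).comp (measurable_fst.prodMk measurable_snd.fst)).prodMk
    ((measurable_cdf_kernel η).comp (measurable_fst.prodMk measurable_snd.snd))

lemma map_compProd_eq_of_ae_map_eq {β γ : Type*} [MeasurableSpace β] [MeasurableSpace γ]
    (ν : Measure α) [IsProbabilityMeasure ν] (κ : Kernel α β) [IsSFiniteKernel κ]
    {f : α → β → γ} (hf : Measurable (Function.uncurry f)) {ρ : Measure γ}
    (h : ∀ᵐ x ∂ν, (κ x).map (f x) = ρ) : (ν ⊗ₘ κ).map (Function.uncurry f) = ρ := by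
  ext s hs
  rw [Measure.map_apply hf hs, Measure.compProd_apply (hf hs)]
  calc ∫⁻ x, κ x (Prod.mk x ⁻¹' (Function.uncurry f ⁻¹' s)) ∂ν = ∫⁻ _, ρ s ∂ν := by
        refine lintegral_congr_ae (h.mono fun x hx => ?_)
        have hfx : Measurable (f x) := hf.comp measurable_prodMk_left
        rw [← hx, Measure.map_apply hfx hs]
        rfl
    _ = ρ s := by simp

lemma map_compProd_prod_cdf_eq_uniform_prod (ν : Measure α) [IsProbabilityMeasure ν]
    (κ η : Kernel α ℝ) [IsMarkovKernel κ] [IsMarkovKernel η]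
    (hκ : ∀ᵐ x ∂ν, Continuous (cdf (κ x))) (hη : ∀ᵐ x ∂ν, Continuous (cdf (η x))) :
    (ν ⊗ₘ (κ ×ₖ η)).map (fun p => (cdf (κ p.1) p.2.1, cdf (η p.1) p.2.2)) =
      (volume.restrict (Icc (0 : ℝ) 1)).prod (volume.restrict (Icc (0 : ℝ) 1)) := by
  refine map_compProd_eq_of_ae_map_eq ν (κ ×ₖ η)
    (f := fun x q => (cdf (κ x) q.1, cdf (η x) q.2)) (measurable_cdf_prod_cdf_kernel κ η) ?_
  filter_upwards [hκ, hη] with x hκx hηx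
  have h := Measure.map_prod_map (κ x) (η x) hκx.measurable hηx.measurable
  rw [map_cdf_eq_uniform _ hκx, map_cdf_eq_uniform _ hηx] at h
  rw [Kernel.prod_apply, h]
  rfl

end Kernel

/-- (i) If `U` is uniform on `[0,1]` and `F` is a continuous strictly increasing distribution
function with inverse `g`, then `g ∘ U` has distribution function `F`; (ii) conversely if `Y`
has continuous distribution function `F` then `F ∘ Y` is uniform on `[0,1]`; (iii) under the
partial copula setup with `Y ⫫ Z | X`, the joint law of `(U,V)` is the product of two uniform
`[0,1]` laws: the partial copula is the independence copula. -/
theorem partial_copula_stmt13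
    {Ω E : Type*} [MeasurableSpace Ω] [StandardBorelSpace Ω] [MeasurableSpace E]
    (μ : Measure Ω) [IsProbabilityMeasure μ] :
    -- (i)
    (∀ (U : Ω → ℝ), Measurable U → μ.map U = volume.restrict (Set.Icc 0 1) →
      ∀ (F : ℝ → ℝ), Continuous F → StrictMono F →
        Filter.Tendsto F Filter.atBot (nhds 0) → Filter.Tendsto F Filter.atTop (nhds 1) →
      ∀ (g : ℝ → ℝ), Measurable g → (∀ u ∈ Set.Ioo (0:ℝ) 1, F (g u) = u) →
        ∀ y : ℝ, ((μ.map (fun ω => g (U ω))) (Set.Iic y)).toReal = F y) ∧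
    -- (ii)
    (∀ (Y : Ω → ℝ), Measurable Y →
      ∀ (F : ℝ → ℝ), (∀ y, F y = ((μ.map Y) (Set.Iic y)).toReal) → Continuous F →
        μ.map (fun ω => F (Y ω)) = volume.restrict (Set.Icc 0 1)) ∧
    -- (iii)
    (∀ (X : Ω → E) (Y Z : Ω → ℝ), Measurable X → Measurable Y → Measurable Z →
      ∀ (F G : E → ℝ → ℝ),
        (∀ x y, F x y = ((condDistrib Y X μ) x (Set.Iic y)).toReal) →
        (∀ x z, G x z = ((condDistrib Z X μ) x (Set.Iic z)).toReal) →
        (∀ᵐ x ∂(μ.map X), Continuous (F x)) →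
        (∀ᵐ x ∂(μ.map X), Continuous (G x)) →
        ∀ (hX : Measurable X),
        CondIndepFun (MeasurableSpace.comap X inferInstance) hX.comap_le Y Z μ →
        μ.map (fun ω => (F (X ω) (Y ω), G (X ω) (Z ω))) =
          (volume.restrict (Set.Icc 0 1)).prod (volume.restrict (Set.Icc 0 1))) := by
  refine ⟨?_, ?_, ?_⟩
  · intro U hU hUdist F _ hF hF0 hF1 g hg hFg y
    have hgU : μ.map (fun ω => g (U ω)) = (μ.map U).map g := (Measure.map_map hg hU).symm
    have hy := hF.mem_Ioo_of_tendsto hF0 hF1 y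
    rw [hgU, hUdist, map_uniform_Iic_of_rightInverse hF hg hFg hy, ENNReal.toReal_ofReal hy.1.le]
  · intro Y hY F hF hFc
    have : IsProbabilityMeasure (μ.map Y) := Measure.isProbabilityMeasure_map hY.aemeasurable
    obtain rfl : F = cdf (μ.map Y) := funext fun y => by rw [hF, cdf_eq_real, measureReal_def]
    have hFY : μ.map (fun ω => cdf (μ.map Y) (Y ω)) = (μ.map Y).map (cdf (μ.map Y)) :=
      (Measure.map_map hFc.measurable hY).symm
    rw [hFY, map_cdf_eq_uniform _ hFc]
  · intro X Y Z _ hY hZ F G hF hG hFc hGc hX hind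
    have : IsProbabilityMeasure (μ.map X) := Measure.isProbabilityMeasure_map hX.aemeasurable
    obtain rfl : F = fun x => ⇑(cdf (condDistrib Y X μ x)) :=
      funext₂ fun x y => by rw [hF, cdf_eq_real, measureReal_def]
    obtain rfl : G = fun x => ⇑(cdf (condDistrib Z X μ x)) :=
      funext₂ fun x z => by rw [hG, cdf_eq_real, measureReal_def]
    have hjoint := (condIndepFun_iff_map_prod_eq_prod_condDistrib_prod_condDistrib hY hZ hX).1 hind
    rw [← Measure.compProd_eq_comp_prod] at hjoint
    rw [← map_compProd_prod_cdf_eq_uniform_prod _ _ _ hFc hGc, ← hjoint,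
      Measure.map_map (measurable_cdf_prod_cdf_kernel _ _) (by fun_prop)]
    rfl
end
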